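/- arXiv:1602.06894 — 2 statements merged into one kernel-verified Lean document; each statement's English description precedes it below -/
import Mathlib

section
/- Let Q be a (d+1)-dimensional polytope in ℝ^{d+1}, let π_d : ℝ^{d+1} → ℝ^d be the projection forgetting the last coordinate, and let F be a proper face of Q with F_1, …, F_k the facets of Q containing F. Then F is strictly preserved by π_d if and only if among F_1, …, F_k there is at least one upper facet and at least one lower facet; and F is preserved but not strictly preserved by π_d if and only if all of F_1, …, F_k are vertical. -/
open Set

noncomputable section

/-- A polytope: the convex hull of a finite set of points. -/
def IsPolytope {N : ℕ} (P : Set (Fin N → ℝ)) : Prop :=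
  ∃ S : Finset (Fin N → ℝ), P = convexHull ℝ (S : Set (Fin N → ℝ))

/-- Dimension of a set: the dimension of its affine hull (with `-1` for the empty set). -/
def pdim {N : ℕ} (P : Set (Fin N → ℝ)) : ℤ :=
  haveI := Classical.dec P.Nonempty
  if P.Nonempty then (Module.finrank ℝ (affineSpan ℝ P).direction : ℤ) else -1

/-- `F` is a face of `P`: the subset of `P` where some linear functional bounded above on `P`
attains its maximum value.  This includes `∅` and `P` itself. -/
def IsFaceOf {N : ℕ} (F P : Set (Fin N → ℝ)) : Prop :=
  ∃ (c : Fin N → ℝ) (b : ℝ),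
    (∀ x ∈ P, ∑ i, c i * x i ≤ b) ∧ F = {x ∈ P | ∑ i, c i * x i = b}

/-- A facet: a face of dimension one less than the polytope. -/
def IsFacetOf {N : ℕ} (F P : Set (Fin N → ℝ)) : Prop :=
  IsFaceOf F P ∧ pdim F + 1 = pdim P

/-- A ridge: a face of dimension two less than the polytope. -/
def IsRidgeOf {N : ℕ} (F P : Set (Fin N → ℝ)) : Prop :=
  IsFaceOf F P ∧ pdim F + 2 = pdim P

def IsVertexOf {N : ℕ} (v : Fin N → ℝ) (P : Set (Fin N → ℝ)) : Prop :=
  IsFaceOf {v} P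

def vertexSet {N : ℕ} (P : Set (Fin N → ℝ)) : Set (Fin N → ℝ) :=
  {v | IsVertexOf v P}

def vertexCount {N : ℕ} (P : Set (Fin N → ℝ)) : ℕ := (vertexSet P).ncard

def facetCount {N : ℕ} (P : Set (Fin N → ℝ)) : ℕ := {F | IsFacetOf F P}.ncard

/-- Extension complexity: the minimal number of facets of a polytope (in any dimension)
admitting an affine projection onto `P`. -/
def xc {N : ℕ} (P : Set (Fin N → ℝ)) : ℕ :=
  sInf {n | ∃ (e : ℕ) (Q : Set (Fin e → ℝ)) (π : (Fin e → ℝ) →ᵃ[ℝ] (Fin N → ℝ)),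
    IsPolytope Q ∧ π '' Q = P ∧ facetCount Q = n}

/-- Combinatorial equivalence: an inclusion-preserving bijection between face lattices. -/
def CombEquiv {M N : ℕ} (P : Set (Fin M → ℝ)) (Q : Set (Fin N → ℝ)) : Prop :=
  ∃ φ : {F : Set (Fin M → ℝ) // IsFaceOf F P} ≃ {G : Set (Fin N → ℝ) // IsFaceOf G Q},
    ∀ F₁ F₂ : {F : Set (Fin M → ℝ) // IsFaceOf F P},
      F₁.1 ⊆ F₂.1 ↔ (φ F₁).1 ⊆ (φ F₂).1

/-- A full-dimensional `n`-simplex in `ℝ^n` with the origin in its (relative) interior. -/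
def simplexF (n : ℕ) : Set (Fin n → ℝ) :=
  convexHull ℝ ((Set.range fun i : Fin n => Pi.single i (1 : ℝ)) ∪ {fun _ => -1})

/-- The Cartesian product `Δ_n × Δ_m`, realized in `ℝ^{n+m}`. -/
def prodP (n m : ℕ) : Set (Fin (n + m) → ℝ) :=
  {z | ∃ a ∈ simplexF n, ∃ b ∈ simplexF m, z = Fin.append a b}

/-- The direct sum `Δ_n ⊕ Δ_m`, realized in `ℝ^{n+m}`. -/
def sumP (n m : ℕ) : Set (Fin (n + m) → ℝ) :=
  convexHull ℝ (((fun a : Fin n → ℝ => Fin.append a (0 : Fin m → ℝ)) '' simplexF n) ∪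
    ((fun b : Fin m → ℝ => Fin.append (0 : Fin n → ℝ) b) '' simplexF m))

/-- The join `A ⋆ B` of two polytopes, realized in `ℝ^{p+q+1}` with the two copies
placed in skew affine subspaces. -/
def joinP {p q : ℕ} (A : Set (Fin p → ℝ)) (B : Set (Fin q → ℝ)) :
    Set (Fin (p + q + 1) → ℝ) :=
  convexHull ℝ
    (((fun a : Fin p → ℝ =>
        Fin.append (Fin.append a (0 : Fin q → ℝ)) (fun _ : Fin 1 => (0 : ℝ))) '' A) ∪
     ((fun b : Fin q → ℝ =>
        Fin.append (Fin.append (0 : Fin p → ℝ) b) (fun _ : Fin 1 => (1 : ℝ))) '' B))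

/-- The canonical `k`-fold iterated pyramid over `X`, realized in `ℝ^{p+k}`. -/
def pyrK {p : ℕ} (k : ℕ) (X : Set (Fin p → ℝ)) : Set (Fin (p + k) → ℝ) :=
  convexHull ℝ (((fun x : Fin p → ℝ => Fin.append x (0 : Fin k → ℝ)) '' X) ∪
    Set.range (fun j : Fin k => Fin.append (0 : Fin p → ℝ) (Pi.single j (1 : ℝ))))

/-- Transport a subset of `ℝ^a` to `ℝ^b` along a proof that `a = b`. -/
def castSet {a b : ℕ} (h : a = b) (X : Set (Fin a → ℝ)) : Set (Fin b → ℝ) :=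
  (fun x : Fin a → ℝ => fun i : Fin b => x (Fin.cast h.symm i)) '' X

/-- Projective equivalence of two subsets of `ℝ^N`: `Q` is the image of `P` under a
projective transformation `x ↦ (A x + b) / (⟨c, x⟩ + δ)` whose associated
`(N+1) × (N+1)` matrix is invertible and whose denominator is positive on `P`. -/
def ProjEquiv {N : ℕ} (P Q : Set (Fin N → ℝ)) : Prop :=
  ∃ (A : (Fin N → ℝ) →ₗ[ℝ] (Fin N → ℝ)) (b c : Fin N → ℝ) (δ : ℝ),
    Function.Bijective
      (fun z : (Fin N → ℝ) × ℝ => (A z.1 + z.2 • b, (∑ i, c i * z.1 i) + δ * z.2)) ∧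
    (∀ x ∈ P, 0 < (∑ i, c i * x i) + δ) ∧
    Q = (fun x : Fin N → ℝ => ((∑ i, c i * x i) + δ)⁻¹ • (A x + b)) '' P

/-- `P` is a pyramid with base `B`: the convex hull of `B` and a point outside
the affine hull of `B`. -/
def IsPyramidOver {N : ℕ} (P B : Set (Fin N → ℝ)) : Prop :=
  ∃ a : Fin N → ℝ, a ∉ affineSpan ℝ B ∧ P = convexHull ℝ (B ∪ {a})

/-- `P` is a `k`-fold iterated pyramid over `B`. -/
def IsKFoldPyramidOver {N : ℕ} : ℕ → Set (Fin N → ℝ) → Set (Fin N → ℝ) → Prop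
  | 0, P, B => P = B
  | k + 1, P, B => ∃ P' : Set (Fin N → ℝ), IsPyramidOver P P' ∧ IsKFoldPyramidOver k P' B

/-- `P` is a pyramid: the convex hull of one of its facets together with one more vertex. -/
def IsPyramidPolytope {N : ℕ} (P : Set (Fin N → ℝ)) : Prop :=
  ∃ (F : Set (Fin N → ℝ)) (v : Fin N → ℝ),
    IsFacetOf F P ∧ IsVertexOf v P ∧ P = convexHull ℝ (F ∪ {v})

/-- A facet is pyramidal if it contains all vertices of the polytope but one. -/
def IsPyramidalFacet {N : ℕ} (F P : Set (Fin N → ℝ)) : Prop :=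
  IsFacetOf F P ∧ ∃ v, IsVertexOf v P ∧ v ∉ F ∧ ∀ w, IsVertexOf w P → w ≠ v → w ∈ F

/-- The projection `π_d : ℝ^{d+1} → ℝ^d` forgetting the last coordinate. -/
def projFun (d : ℕ) : (Fin (d + 1) → ℝ) → (Fin d → ℝ) :=
  fun x i => x i.castSucc

/-- `c` is an outer normal vector exposing the face `F` of `Q`. -/
def IsOuterNormal {N : ℕ} (Q F : Set (Fin N → ℝ)) (c : Fin N → ℝ) : Prop :=
  ∃ b : ℝ, (∀ x ∈ Q, ∑ i, c i * x i ≤ b) ∧ F = {x ∈ Q | ∑ i, c i * x i = b}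

/-- An upper facet: outer normal with positive last coordinate. -/
def IsUpperFacet {d : ℕ} (F Q : Set (Fin (d + 1) → ℝ)) : Prop :=
  IsFacetOf F Q ∧ ∃ c, IsOuterNormal Q F c ∧ 0 < c (Fin.last d)

/-- A lower facet: outer normal with negative last coordinate. -/
def IsLowerFacet {d : ℕ} (F Q : Set (Fin (d + 1) → ℝ)) : Prop :=
  IsFacetOf F Q ∧ ∃ c, IsOuterNormal Q F c ∧ c (Fin.last d) < 0

/-- A vertical facet: every outer normal has vanishing last coordinate. -/
def IsVerticalFacet {d : ℕ} (F Q : Set (Fin (d + 1) → ℝ)) : Prop :=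
  IsFacetOf F Q ∧ ∀ c, IsOuterNormal Q F c → c (Fin.last d) = 0

/-- An equatorial ridge: a ridge that is the intersection of an upper and a lower facet. -/
def IsEquatorialRidge {d : ℕ} (F Q : Set (Fin (d + 1) → ℝ)) : Prop :=
  IsRidgeOf F Q ∧ ∃ F₁ F₂ : Set (Fin (d + 1) → ℝ),
    IsUpperFacet F₁ Q ∧ IsLowerFacet F₂ Q ∧ F = F₁ ∩ F₂

/-- A face `F` of `Q` is preserved under the projection forgetting the last coordinate. -/
def PreservedFace {d : ℕ} (Q F : Set (Fin (d + 1) → ℝ)) : Prop :=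
  IsFaceOf (projFun d '' F) (projFun d '' Q) ∧ projFun d ⁻¹' (projFun d '' F) ∩ Q = F

/-- A face `F` of `Q` is strictly preserved: preserved and of the same dimension as its image. -/
def StrictlyPreservedFace {d : ℕ} (Q F : Set (Fin (d + 1) → ℝ)) : Prop :=
  PreservedFace Q F ∧ pdim (projFun d '' F) = pdim F

/-- A hexagon: a 2-dimensional polytope with exactly 6 vertices. -/
def IsHexagon {N : ℕ} (P : Set (Fin N → ℝ)) : Prop :=
  IsPolytope P ∧ pdim P = 2 ∧ vertexCount P = 6

/-- Three lines are concurrent: they share a common point, or they are pairwise parallel. -/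
def ConcurrentLines {N : ℕ} (L₁ L₂ L₃ : AffineSubspace ℝ (Fin N → ℝ)) : Prop :=
  (∃ x, x ∈ L₁ ∧ x ∈ L₂ ∧ x ∈ L₃) ∨
    (AffineSubspace.Parallel L₁ L₂ ∧ AffineSubspace.Parallel L₂ L₃ ∧
      AffineSubspace.Parallel L₁ L₃)

/-- A cyclic labeling of the vertices of a hexagon: consecutive points are joined by edges. -/
def CyclicLabeling {N : ℕ} (P : Set (Fin N → ℝ)) (p : Fin 6 → (Fin N → ℝ)) : Prop :=
  Function.Injective p ∧ Set.range p = vertexSet P ∧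
    ∀ i : Fin 6, IsFaceOf (segment ℝ (p i) (p (i + 1))) P

/-- A Desarguian hexagon. -/
def Desarguian {N : ℕ} (P : Set (Fin N → ℝ)) : Prop :=
  ∃ p : Fin 6 → (Fin N → ℝ), CyclicLabeling P p ∧
    ConcurrentLines (affineSpan ℝ {p 0, p 1}) (affineSpan ℝ {p 5, p 2})
      (affineSpan ℝ {p 3, p 4})

/-- A polytope is simplicial if every facet is a simplex. -/
def IsSimplicial {N : ℕ} (P : Set (Fin N → ℝ)) : Prop :=
  ∀ F : Set (Fin N → ℝ), IsFacetOf F P →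
    ∃ S : Finset (Fin N → ℝ),
      AffineIndependent ℝ (Subtype.val : {x // x ∈ S} → (Fin N → ℝ)) ∧
      F = convexHull ℝ (S : Set (Fin N → ℝ))

/-!
A face `F` is preserved by `π_d` iff it has an outer normal with vanishing last coordinate, and
`π_d` keeps its dimension iff the vertical direction `e` is not parallel to `F`. Outer normals of
`F` stay outer normals of `F` when a nonnegative multiple of a normal of a face containing `F` is
added, or when they are tilted slightly in a direction constant on `F`. Rotating a normal of `F`
about `F`, orthogonally to `e`, until a new vertex enters the face, and repeating, turns any
normal of `F` with nonzero last coordinate into the normal of a facet through `F` with the same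
last coordinate.

So if `e` is not parallel to `F`, tilting a horizontal normal of `F` up or down yields an upper
and a lower facet through `F`; conversely, the normals of an upper and a lower facet through `F`
combine with a normal of `F` into a horizontal one, and they are not constant along `e`, so `e`
is not parallel to `F`. If `e` is parallel to `F`, every normal of every facet through `F` is
horizontal; and if all facets through `F` are vertical, so is every normal of `F`.
-/

open Matrix Filter Topology

theorem add_smul_dotProduct {R n : Type*} [CommSemiring R] [Fintype n] (c w x : n → R)
    (t : R) :
    (c + t • w) ⬝ᵥ x = c ⬝ᵥ x + t * (w ⬝ᵥ x) := by
  rw [add_dotProduct, smul_dotProduct, smul_eq_mul]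

theorem exists_dotProduct_eq_one_of_notMem {K n : Type*} [Field K] [Fintype n] [DecidableEq n]
    {U : Submodule K (n → K)} {v : n → K} (hv : v ∉ U) :
    ∃ w : n → K, (∀ u ∈ U, w ⬝ᵥ u = 0) ∧ w ⬝ᵥ v = 1 := by
  obtain ⟨f, hfv, hfU⟩ := U.exists_dual_map_eq_bot_of_notMem hv inferInstance
  have hdot (g : Module.Dual K (n → K)) (x : n → K) :
      (dotProductEquiv K n).symm g ⬝ᵥ x = g x := by
    rw [← dotProductEquiv_apply_apply, LinearEquiv.apply_symm_apply]
  refine ⟨(dotProductEquiv K n).symm ((f v)⁻¹ • f), fun u hu => ?_, ?_⟩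
  · have : f u = 0 := by simpa [hfU] using Submodule.mem_map_of_mem (f := f) hu
    simp [hdot, this]
  · simp [hdot, hfv]

theorem LinearMap.finrank_map_eq_iff_disjoint_ker {K V W : Type*} [Field K] [AddCommGroup V]
    [Module K V] [AddCommGroup W] [Module K W] [FiniteDimensional K V] (f : V →ₗ[K] W)
    (p : Submodule K V) :
    Module.finrank K (p.map f) = Module.finrank K p ↔ Disjoint p (LinearMap.ker f) := by
  rw [← LinearMap.range_domRestrict, ← LinearMap.injective_domRestrict_iff,
    ← LinearMap.ker_eq_bot, ← Submodule.finrank_eq_zero]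
  have := LinearMap.finrank_range_add_finrank_ker (f.domRestrict p)
  omega

theorem LinearMap.ker_funLeft_castSucc {R : Type*} [CommRing R] {d : ℕ} :
    LinearMap.ker (LinearMap.funLeft R R (Fin.castSucc : Fin d → Fin (d + 1))) =
      R ∙ Pi.single (Fin.last d) 1 := by
  ext v
  rw [LinearMap.mem_ker, Submodule.mem_span_singleton]
  constructor
  · intro hv
    refine ⟨v (Fin.last d), funext fun j => Fin.lastCases (by simp) (fun i => ?_) j⟩
    simpa [(Fin.castSucc_lt_last i).ne] using (congrFun hv i).symm
  · rintro ⟨a, rfl⟩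
    funext i
    simp [LinearMap.funLeft_apply, (Fin.castSucc_lt_last i).ne]

theorem Finset.exists_pos_mul_le_with_eq {ι : Type*} (S : Finset ι) {a δ : ι → ℝ}
    (ha : ∀ i ∈ S, 0 ≤ a i) (hδ : ∀ i ∈ S, a i = 0 → δ i ≤ 0) {i₀ : ι} (hi₀ : i₀ ∈ S)
    (hδ₀ : 0 < δ i₀) :
    ∃ θ > 0, (∀ i ∈ S, θ * δ i ≤ a i) ∧ ∃ i ∈ S, 0 < a i ∧ θ * δ i = a i := by
  set P := S.filter (0 < δ ·)
  have hP : P.Nonempty := ⟨i₀, Finset.mem_filter.2 ⟨hi₀, hδ₀⟩⟩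
  have hPa : ∀ i ∈ P, 0 < a i := fun i hi => by
    obtain ⟨hiS, hδi⟩ := Finset.mem_filter.1 hi
    exact (ha i hiS).lt_of_ne fun h => (hδ i hiS h.symm).not_gt hδi
  have hPδ : ∀ i ∈ P, 0 < δ i := fun i hi => (Finset.mem_filter.1 hi).2
  obtain ⟨i₁, hi₁, hθ⟩ := Finset.exists_mem_eq_inf' hP (fun i => a i / δ i)
  refine ⟨a i₁ / δ i₁, div_pos (hPa i₁ hi₁) (hPδ i₁ hi₁), fun i hi => ?_,
    i₁, (Finset.mem_filter.1 hi₁).1, hPa i₁ hi₁, div_mul_cancel₀ _ (hPδ i₁ hi₁).ne'⟩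
  by_cases hδi : 0 < δ i
  · have hiP : i ∈ P := Finset.mem_filter.2 ⟨hi, hδi⟩
    rw [← hθ, ← le_div_iff₀ hδi]
    exact Finset.inf'_le _ hiP
  · nlinarith [ha i hi, hPa i₁ hi₁, hPδ i₁ hi₁, div_pos (hPa i₁ hi₁) (hPδ i₁ hi₁)]

section OuterNormal

variable {N : ℕ} {Q F G F₁ F₂ : Set (Fin N → ℝ)} {c n n₁ n₂ w e : Fin N → ℝ}

theorem dotProduct_le_of_mem_convexHull {S : Set (Fin N → ℝ)} {b : ℝ}
    (h : ∀ s ∈ S, c ⬝ᵥ s ≤ b) {x : Fin N → ℝ} (hx : x ∈ convexHull ℝ S) : c ⬝ᵥ x ≤ b :=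
  convexHull_min h (convex_halfSpace_le (dotProductEquiv ℝ (Fin N) c).isLinear b) hx

theorem dotProduct_eq_of_forall_mem_vectorSpan (hw : ∀ v ∈ vectorSpan ℝ F, w ⬝ᵥ v = 0)
    {x y : Fin N → ℝ} (hx : x ∈ F) (hy : y ∈ F) : w ⬝ᵥ x = w ⬝ᵥ y := by
  have := hw _ (vsub_mem_vectorSpan ℝ hx hy)
  rwa [vsub_eq_sub, dotProduct_sub, sub_eq_zero] at this

theorem pdim_of_nonempty (h : F.Nonempty) : pdim F = Module.finrank ℝ (vectorSpan ℝ F) := by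
  rw [pdim, if_pos h, direction_affineSpan]

theorem vectorSpan_eq_top_of_pdim_convexHull {S : Set (Fin N → ℝ)}
    (h : pdim (convexHull ℝ S) = N) : vectorSpan ℝ S = ⊤ := by
  have hne : (convexHull ℝ S).Nonempty := by
    by_contra hne
    rw [pdim, if_neg hne] at h
    omega
  rw [pdim_of_nonempty hne, ← direction_affineSpan, affineSpan_convexHull,
    direction_affineSpan] at h
  exact Submodule.eq_top_of_finrank_eq (by rw [Module.finrank_fin_fun]; exact_mod_cast h)

theorem isOuterNormal_iff :
    IsOuterNormal Q F c ↔ ∃ b, (∀ x ∈ Q, c ⬝ᵥ x ≤ b) ∧ F = {x ∈ Q | c ⬝ᵥ x = b} :=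
  Iff.rfl

theorem IsOuterNormal.dotProduct_eq_zero_of_mem_vectorSpan (h : IsOuterNormal Q F c)
    {v : Fin N → ℝ} (hv : v ∈ vectorSpan ℝ F) : c ⬝ᵥ v = 0 := by
  obtain ⟨b, -, rfl⟩ := isOuterNormal_iff.1 h
  suffices vectorSpan ℝ {x ∈ Q | c ⬝ᵥ x = b} ≤ LinearMap.ker (dotProductEquiv ℝ (Fin N) c) from
    this hv
  rw [vectorSpan_def, Submodule.span_le]
  rintro _ ⟨x, hx, y, hy, rfl⟩
  simp [dotProduct_sub, hx.2, hy.2]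

theorem IsOuterNormal.finrank_vectorSpan_add_one_le (h : IsOuterNormal Q F c) (hc : c ≠ 0) :
    Module.finrank ℝ (vectorSpan ℝ F) + 1 ≤ N := by
  have hφ : dotProductEquiv ℝ (Fin N) c ≠ 0 := by simpa using hc
  have hle : vectorSpan ℝ F ≤ LinearMap.ker (dotProductEquiv ℝ (Fin N) c) := fun v hv =>
    h.dotProduct_eq_zero_of_mem_vectorSpan hv
  have := Module.Dual.finrank_ker_add_one_of_ne_zero hφ
  rw [Module.finrank_fin_fun] at this
  have := Submodule.finrank_mono hle
  omega

theorem IsOuterNormal.add_smul (hF : IsOuterNormal Q F c) (hG : IsOuterNormal Q G n)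
    (hFG : F ⊆ G) {t : ℝ} (ht : 0 ≤ t) : IsOuterNormal Q F (c + t • n) := by
  obtain ⟨b, hb, rfl⟩ := isOuterNormal_iff.1 hF
  obtain ⟨b', hb', rfl⟩ := isOuterNormal_iff.1 hG
  refine isOuterNormal_iff.2 ⟨b + t * b', fun x hx => ?_, ?_⟩
  · rw [add_smul_dotProduct]
    nlinarith [hb x hx, hb' x hx]
  · ext x
    refine ⟨fun hx => ⟨hx.1, ?_⟩, fun ⟨hx, hcx⟩ => ⟨hx, ?_⟩⟩
    · rw [add_smul_dotProduct, hx.2, (hFG hx).2]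
    · rw [add_smul_dotProduct] at hcx
      nlinarith [hb x hx, hb' x hx]

theorem IsOuterNormal.exists_dotProduct_eq_zero (hF : IsOuterNormal Q F c)
    (hF₁ : IsOuterNormal Q F₁ n₁) (hF₂ : IsOuterNormal Q F₂ n₂) (h₁ : F ⊆ F₁) (h₂ : F ⊆ F₂)
    (hn₁ : 0 < n₁ ⬝ᵥ e) (hn₂ : n₂ ⬝ᵥ e < 0) : ∃ c', IsOuterNormal Q F c' ∧ c' ⬝ᵥ e = 0 := by
  rcases le_total 0 (c ⬝ᵥ e) with hc | hc
  · refine ⟨_, hF.add_smul hF₂ h₂ (div_nonneg hc (neg_nonneg.2 hn₂.le)), ?_⟩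
    rw [add_smul_dotProduct, div_neg, neg_mul, div_mul_cancel₀ _ hn₂.ne, add_neg_cancel]
  · refine ⟨_, hF.add_smul hF₁ h₁ (div_nonneg (neg_nonneg.2 hc) hn₁.le), ?_⟩
    rw [add_smul_dotProduct, div_mul_cancel₀ _ hn₁.ne', add_neg_cancel]

theorem IsOuterNormal.exists_add_smul (hQ : IsPolytope Q) (hF : IsOuterNormal Q F c) {β : ℝ}
    (hw : ∀ x ∈ F, w ⬝ᵥ x = β) : ∃ t > (0 : ℝ), IsOuterNormal Q F (c + t • w) := by
  obtain ⟨S, rfl⟩ := hQ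
  obtain ⟨b, hb, rfl⟩ := isOuterNormal_iff.1 hF
  have hvalid : ∀ᶠ t in 𝓝[>] (0 : ℝ), ∀ s ∈ S, c ⬝ᵥ s + t * (w ⬝ᵥ s - β) ≤ b := by
    refine (eventually_all_finset S).2 fun s hs => ?_
    have hsQ : s ∈ convexHull ℝ (S : Set (Fin N → ℝ)) := subset_convexHull ℝ _ hs
    rcases (hb s hsQ).lt_or_eq with hlt | heq
    · have hlim : Tendsto (fun t : ℝ => c ⬝ᵥ s + t * (w ⬝ᵥ s - β)) (𝓝 0) (𝓝 (c ⬝ᵥ s)) :=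
        (by fun_prop : Continuous fun t : ℝ => c ⬝ᵥ s + t * (w ⬝ᵥ s - β)).tendsto' 0 _
          (by simp)
      exact nhdsWithin_le_nhds (hlim.eventually (eventually_le_nhds hlt))
    · simp [heq, hw s ⟨hsQ, heq⟩]
  obtain ⟨t, ht, ht0⟩ := (hvalid.and self_mem_nhdsWithin).exists
  have hle : ∀ x ∈ convexHull ℝ (S : Set (Fin N → ℝ)), c ⬝ᵥ x + t * (w ⬝ᵥ x) ≤ b + t * β :=
    fun x hx => by
      rw [← add_smul_dotProduct]
      refine dotProduct_le_of_mem_convexHull (fun s hs => ?_) hx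
      rw [add_smul_dotProduct]
      linarith [ht s hs]
  -- halfway to `t`, equality forces equality both at `0` and at `t`
  refine ⟨t / 2, half_pos ht0, isOuterNormal_iff.2 ⟨b + t / 2 * β, fun x hx => ?_, ?_⟩⟩
  · rw [add_smul_dotProduct]
    linarith [hb x hx, hle x hx]
  · ext x
    refine ⟨fun ⟨hx, hcx⟩ => ⟨hx, ?_⟩, fun ⟨hx, hcx⟩ => ⟨hx, ?_⟩⟩
    · rw [add_smul_dotProduct, hcx, hw x ⟨hx, hcx⟩]
    · rw [add_smul_dotProduct] at hcx
      linarith [hb x hx, hle x hx]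

theorem exists_dotProduct_lt_of_vectorSpan_eq_top {S : Set (Fin N → ℝ)}
    (hS : vectorSpan ℝ S = ⊤) {U : Submodule ℝ (Fin N → ℝ)} (hU : U ≠ ⊤) (t₀ : Fin N → ℝ) :
    ∃ w : Fin N → ℝ, (∀ u ∈ U, w ⬝ᵥ u = 0) ∧ ∃ s ∈ S, w ⬝ᵥ t₀ < w ⬝ᵥ s := by
  obtain ⟨s, hs, hsU⟩ : ∃ s ∈ S, s - t₀ ∉ U := by
    by_contra! h
    refine hU (eq_top_iff.2 ?_)
    rw [← hS, ← direction_affineSpan, ← AffineSubspace.direction_mk' t₀ U]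
    exact AffineSubspace.direction_le
      (affineSpan_le.2 fun s hs => AffineSubspace.mem_mk'.2 (h s hs))
  obtain ⟨w, hwU, hw⟩ := exists_dotProduct_eq_one_of_notMem hsU
  rw [dotProduct_sub] at hw
  exact ⟨w, hwU, s, hs, by linarith⟩

theorem IsOuterNormal.exists_rotate {S : Finset (Fin N → ℝ)}
    (hF : IsOuterNormal (convexHull ℝ ↑S) F c) {β : ℝ} (hw : ∀ x ∈ F, w ⬝ᵥ x = β)
    {s₀ : Fin N → ℝ} (hs₀ : s₀ ∈ S) (hβ : β < w ⬝ᵥ s₀) :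
    ∃ θ : ℝ, ∃ G, IsOuterNormal (convexHull ℝ ↑S) G (c + θ • w) ∧ F ⊆ G ∧
      ∃ s ∈ S, s ∈ G ∧ s ∉ F := by
  obtain ⟨b, hb, rfl⟩ := isOuterNormal_iff.1 hF
  have hSQ : ∀ s ∈ S, s ∈ convexHull ℝ (S : Set (Fin N → ℝ)) := fun s hs =>
    subset_convexHull ℝ _ hs
  obtain ⟨θ, -, hθ, s, hs, hslack, hseq⟩ := S.exists_pos_mul_le_with_eq
    (a := fun s => b - c ⬝ᵥ s) (δ := fun s => w ⬝ᵥ s - β)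
    (fun s hs => sub_nonneg.2 (hb s (hSQ s hs)))
    (fun s hs h => by rw [hw s ⟨hSQ s hs, by linarith⟩, sub_self]) hs₀ (sub_pos.2 hβ)
  refine ⟨θ, _, isOuterNormal_iff.2 ⟨b + θ * β, fun x hx => ?_, rfl⟩, ?_, s, hs, ?_, ?_⟩
  · refine dotProduct_le_of_mem_convexHull (fun s hs => ?_) hx
    rw [add_smul_dotProduct]
    linarith [hθ s hs]
  · rintro x ⟨hx, hcx⟩
    exact ⟨hx, by rw [add_smul_dotProduct, hcx, hw x ⟨hx, hcx⟩]⟩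
  · exact ⟨hSQ s hs, by rw [add_smul_dotProduct]; linarith⟩
  · exact fun h => by linarith [h.2]

theorem IsOuterNormal.exists_facet_superset (hQ : IsPolytope Q) (hdQ : pdim Q = N)
    (hF : IsOuterNormal Q F c) (hne : F.Nonempty) (he : c ⬝ᵥ e ≠ 0) :
    ∃ G c', IsFacetOf G Q ∧ F ⊆ G ∧ IsOuterNormal Q G c' ∧ c' ⬝ᵥ e = c ⬝ᵥ e := by
  classical
  obtain ⟨S, rfl⟩ := hQ
  have hS := vectorSpan_eq_top_of_pdim_convexHull hdQ
  induction hk : (S.filter (· ∉ F)).card using Nat.strong_induction_on generalizing F c with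
  | _ k ih =>
  by_cases hfacet : pdim F + 1 = pdim (convexHull ℝ (S : Set (Fin N → ℝ)))
  · exact ⟨F, c, ⟨⟨c, hF⟩, hfacet⟩, subset_rfl, hF, rfl⟩
  have he₀ : e ≠ 0 := by rintro rfl; simp at he
  have hU : vectorSpan ℝ F ⊔ ℝ ∙ e ≠ ⊤ := by
    intro hU
    have hsup := Submodule.finrank_add_le_finrank_add_finrank (vectorSpan ℝ F) (ℝ ∙ e)
    rw [hU, finrank_top, Module.finrank_fin_fun, finrank_span_singleton he₀] at hsup
    have hc := hF.finrank_vectorSpan_add_one_le (by rintro rfl; simp at he)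
    rw [pdim_of_nonempty hne, hdQ] at hfacet
    omega
  -- rotate `c` about `F`, orthogonally to `e`, until a new vertex joins the face
  obtain ⟨t₀, ht₀⟩ := hne
  obtain ⟨w, hwU, s₀, hs₀, hβ⟩ := exists_dotProduct_lt_of_vectorSpan_eq_top hS hU t₀
  have hwF : ∀ x ∈ F, w ⬝ᵥ x = w ⬝ᵥ t₀ := fun x hx =>
    dotProduct_eq_of_forall_mem_vectorSpan (fun v hv => hwU v (Submodule.mem_sup_left hv)) hx ht₀
  have hwe : w ⬝ᵥ e = 0 := hwU e (Submodule.mem_sup_right (Submodule.mem_span_singleton_self e))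
  obtain ⟨θ, G, hG, hFG, s, hs, hsG, hsF⟩ := hF.exists_rotate hwF hs₀ hβ
  have hce : (c + θ • w) ⬝ᵥ e = c ⬝ᵥ e := by rw [add_smul_dotProduct, hwe, mul_zero, add_zero]
  have hfewer : S.filter (· ∉ G) ⊂ S.filter (· ∉ F) :=
    (Finset.ssubset_iff_of_subset
      (Finset.monotone_filter_right S fun x _ hxG hxF => hxG (hFG hxF))).2
        ⟨s, Finset.mem_filter.2 ⟨hs, hsF⟩, fun h => (Finset.mem_filter.1 h).2 hsG⟩
  obtain ⟨G', c', hG', hGG', hc', hc'e⟩ :=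
    ih _ (hk ▸ Finset.card_lt_card hfewer) ⟨t₀, hFG ht₀⟩ (hce ▸ he) hG rfl
  exact ⟨G', c', hG', hFG.trans hGG', hc', hc'e.trans hce⟩

theorem IsOuterNormal.exists_facet_superset_dotProduct_pos (hQ : IsPolytope Q)
    (hdQ : pdim Q = N) (hF : IsOuterNormal Q F c) (hne : F.Nonempty) (hc : c ⬝ᵥ e = 0)
    (he : e ∉ vectorSpan ℝ F) :
    ∃ G c', IsFacetOf G Q ∧ F ⊆ G ∧ IsOuterNormal Q G c' ∧ 0 < c' ⬝ᵥ e := by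
  obtain ⟨w, hwF, hwe⟩ := exists_dotProduct_eq_one_of_notMem he
  obtain ⟨t₀, ht₀⟩ := hne
  obtain ⟨t, ht, htF⟩ := hF.exists_add_smul hQ fun x hx =>
    dotProduct_eq_of_forall_mem_vectorSpan hwF hx ht₀
  have hte : (c + t • w) ⬝ᵥ e = t := by rw [add_smul_dotProduct, hc, hwe, mul_one, zero_add]
  obtain ⟨G, c', hG, hFG, hc', hc'e⟩ :=
    htF.exists_facet_superset hQ hdQ ⟨t₀, ht₀⟩ (hte ▸ ht.ne')
  exact ⟨G, c', hG, hFG, hc', hc'e.trans hte ▸ ht⟩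

end OuterNormal

section Projection

variable {d : ℕ} {Q F : Set (Fin (d + 1) → ℝ)}

theorem dotProduct_eq_init_dotProduct {c : Fin (d + 1) → ℝ} (hc : c (Fin.last d) = 0)
    (x : Fin (d + 1) → ℝ) : c ⬝ᵥ x = Fin.init c ⬝ᵥ projFun d x := by
  rw [dotProduct, Fin.sum_univ_castSucc, hc, zero_mul, add_zero]
  rfl

theorem preservedFace_iff :
    PreservedFace Q F ↔ ∃ c, IsOuterNormal Q F c ∧ c (Fin.last d) = 0 := by
  constructor
  · rintro ⟨⟨g, hg⟩, hpre⟩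
    obtain ⟨b, hb, hgF⟩ := isOuterNormal_iff.1 hg
    have hc : (Fin.snoc g 0 : Fin (d + 1) → ℝ) (Fin.last d) = 0 := Fin.snoc_last ..
    have key x := dotProduct_eq_init_dotProduct hc x
    rw [Fin.init_snoc] at key
    refine ⟨Fin.snoc g 0, isOuterNormal_iff.2 ⟨b, fun x hx => ?_, ?_⟩, hc⟩
    · rw [key]
      exact hb _ ⟨x, hx, rfl⟩
    · rw [← hpre, hgF]
      ext x
      exact ⟨fun ⟨⟨_, hx⟩, hQ⟩ => ⟨hQ, (key x).trans hx⟩,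
        fun ⟨hQ, hx⟩ => ⟨⟨⟨x, hQ, rfl⟩, (key x).symm.trans hx⟩, hQ⟩⟩
  · rintro ⟨c, hcF, hc⟩
    obtain ⟨b, hb, rfl⟩ := isOuterNormal_iff.1 hcF
    have key x := dotProduct_eq_init_dotProduct hc x
    refine ⟨⟨Fin.init c, isOuterNormal_iff.2 ⟨b, ?_, ?_⟩⟩, ?_⟩
    · rintro _ ⟨x, hx, rfl⟩
      exact (key x).symm.trans_le (hb x hx)
    · ext y
      constructor
      · rintro ⟨x, ⟨hx, hcx⟩, rfl⟩
        exact ⟨⟨x, hx, rfl⟩, (key x).symm.trans hcx⟩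
      · rintro ⟨⟨x, hx, rfl⟩, hcx⟩
        exact ⟨x, ⟨hx, (key x).trans hcx⟩, rfl⟩
    · ext x
      constructor
      · rintro ⟨⟨x', ⟨-, hcx'⟩, hxx'⟩, hx⟩
        exact ⟨hx, by rw [key, ← hxx', ← key, hcx']⟩
      · exact fun hx => ⟨⟨x, hx, rfl⟩, hx.1⟩

theorem pdim_image_projFun_eq_iff (hF : F.Nonempty) :
    pdim (projFun d '' F) = pdim F ↔ Pi.single (Fin.last d) 1 ∉ vectorSpan ℝ F := by
  have hproj : projFun d = LinearMap.funLeft ℝ ℝ Fin.castSucc := rfl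
  rw [pdim_of_nonempty (hF.image _), pdim_of_nonempty hF, Nat.cast_inj, hproj,
    ← LinearMap.coe_toAffineMap, ← AffineMap.map_vectorSpan, LinearMap.toAffineMap_linear,
    LinearMap.finrank_map_eq_iff_disjoint_ker, LinearMap.ker_funLeft_castSucc,
    Submodule.disjoint_span_singleton' (by simp)]

theorem exists_upper_lower_of_strictlyPreservedFace (hQ : IsPolytope Q)
    (hdQ : pdim Q = d + 1) (hne : F.Nonempty) (h : StrictlyPreservedFace Q F) :
    ∃ F₁ F₂, F ⊆ F₁ ∧ F ⊆ F₂ ∧ IsUpperFacet F₁ Q ∧ IsLowerFacet F₂ Q := by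
  obtain ⟨c, hF, hc⟩ := preservedFace_iff.1 h.1
  have he := (pdim_image_projFun_eq_iff hne).1 h.2
  have hdQ' : pdim Q = (d + 1 : ℕ) := by exact_mod_cast hdQ
  obtain ⟨F₁, n₁, hF₁, h₁, hn₁, hpos⟩ := hF.exists_facet_superset_dotProduct_pos hQ hdQ' hne
    (by simp [hc]) he
  obtain ⟨F₂, n₂, hF₂, h₂, hn₂, hneg⟩ := hF.exists_facet_superset_dotProduct_pos hQ hdQ' hne
    (e := -Pi.single (Fin.last d) 1) (by simp [hc]) (by rwa [Submodule.neg_mem_iff])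
  simp only [dotProduct_neg, dotProduct_single, mul_one, neg_pos] at hpos hneg
  exact ⟨F₁, F₂, h₁, h₂, ⟨hF₁, n₁, hn₁, hpos⟩, ⟨hF₂, n₂, hn₂, hneg⟩⟩

theorem strictlyPreservedFace_of_subset (hF : IsFaceOf F Q) (hne : F.Nonempty)
    {F₁ F₂ : Set (Fin (d + 1) → ℝ)} (h₁ : F ⊆ F₁) (h₂ : F ⊆ F₂) (hu : IsUpperFacet F₁ Q)
    (hl : IsLowerFacet F₂ Q) : StrictlyPreservedFace Q F := by
  obtain ⟨c, hcF⟩ : ∃ c, IsOuterNormal Q F c := hF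
  obtain ⟨-, n₁, hn₁, hpos⟩ := hu
  obtain ⟨-, n₂, hn₂, hneg⟩ := hl
  have hdot (v : Fin (d + 1) → ℝ) : v ⬝ᵥ Pi.single (Fin.last d) 1 = v (Fin.last d) := by simp
  obtain ⟨c', hc'F, hc'⟩ := hcF.exists_dotProduct_eq_zero hn₁ hn₂ h₁ h₂
    (e := Pi.single (Fin.last d) 1) (by rwa [hdot]) (by rwa [hdot])
  refine ⟨preservedFace_iff.2 ⟨c', hc'F, by rwa [hdot] at hc'⟩,
    (pdim_image_projFun_eq_iff hne).2 fun he => hpos.ne' ?_⟩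
  rw [← hdot n₁]
  exact hn₁.dotProduct_eq_zero_of_mem_vectorSpan (vectorSpan_mono ℝ h₁ he)

theorem isVerticalFacet_of_pdim_image_projFun_ne (hne : F.Nonempty)
    (h : pdim (projFun d '' F) ≠ pdim F) {G : Set (Fin (d + 1) → ℝ)} (hG : IsFacetOf G Q)
    (hFG : F ⊆ G) : IsVerticalFacet G Q := by
  have he : Pi.single (Fin.last d) 1 ∈ vectorSpan ℝ F := by
    by_contra he
    exact h ((pdim_image_projFun_eq_iff hne).2 he)
  refine ⟨hG, fun n hn => ?_⟩
  simpa using hn.dotProduct_eq_zero_of_mem_vectorSpan (vectorSpan_mono ℝ hFG he)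

theorem preservedFace_of_forall_isVerticalFacet (hQ : IsPolytope Q) (hdQ : pdim Q = d + 1)
    (hF : IsFaceOf F Q) (hne : F.Nonempty)
    (hall : ∀ G, IsFacetOf G Q → F ⊆ G → IsVerticalFacet G Q) : PreservedFace Q F := by
  obtain ⟨c, hc⟩ : ∃ c, IsOuterNormal Q F c := hF
  refine preservedFace_iff.2 ⟨c, hc, by_contra fun hlast => ?_⟩
  obtain ⟨G, c', hG, hFG, hc', hc'e⟩ := hc.exists_facet_superset hQ
    (by exact_mod_cast hdQ) hne (e := Pi.single (Fin.last d) 1) (by simpa using hlast)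
  exact hlast (by simpa [(hall G hG hFG).2 c' hc'] using hc'e.symm)

end Projection

theorem projection_lemma_general (d : ℕ) (Q : Set (Fin (d + 1) → ℝ))
    (hQ : IsPolytope Q) (hdQ : pdim Q = d + 1)
    (F : Set (Fin (d + 1) → ℝ)) (hF : IsFaceOf F Q) (hFne : F.Nonempty) :
    (StrictlyPreservedFace Q F ↔
      ∃ F₁ F₂ : Set (Fin (d + 1) → ℝ),
        F ⊆ F₁ ∧ F ⊆ F₂ ∧ IsUpperFacet F₁ Q ∧ IsLowerFacet F₂ Q) ∧
    ((PreservedFace Q F ∧ ¬ StrictlyPreservedFace Q F) ↔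
      ∀ G : Set (Fin (d + 1) → ℝ), IsFacetOf G Q → F ⊆ G → IsVerticalFacet G Q) := by
  have hstrict : StrictlyPreservedFace Q F ↔ ∃ F₁ F₂ : Set (Fin (d + 1) → ℝ),
      F ⊆ F₁ ∧ F ⊆ F₂ ∧ IsUpperFacet F₁ Q ∧ IsLowerFacet F₂ Q :=
    ⟨exists_upper_lower_of_strictlyPreservedFace hQ hdQ hFne,
      fun ⟨_, _, h₁, h₂, hu, hl⟩ => strictlyPreservedFace_of_subset hF hFne h₁ h₂ hu hl⟩
  refine ⟨hstrict, fun ⟨hpres, hns⟩ G hG hFG =>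
    isVerticalFacet_of_pdim_image_projFun_ne hFne (fun h => hns ⟨hpres, h⟩) hG hFG,
    fun hall => ⟨preservedFace_of_forall_isVerticalFacet hQ hdQ hF hFne hall, fun hs => ?_⟩⟩
  obtain ⟨F₁, -, h₁, -, ⟨hF₁, n₁, hn₁, hpos⟩, -⟩ := hstrict.1 hs
  exact hpos.ne' ((hall F₁ hF₁ h₁).2 n₁ hn₁)

theorem projection_lemma (d : ℕ) (Q : Set (Fin (d + 1) → ℝ))
    (hQ : IsPolytope Q) (hdQ : pdim Q = d + 1)
    (F : Set (Fin (d + 1) → ℝ)) (hF : IsFaceOf F Q) (hFne : F.Nonempty) (hFpr : F ≠ Q) :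
    (StrictlyPreservedFace Q F ↔
      ∃ F₁ F₂ : Set (Fin (d + 1) → ℝ),
        F ⊆ F₁ ∧ F ⊆ F₂ ∧ IsUpperFacet F₁ Q ∧ IsLowerFacet F₂ Q) ∧
    ((PreservedFace Q F ∧ ¬ StrictlyPreservedFace Q F) ↔
      ∀ G : Set (Fin (d + 1) → ℝ), IsFacetOf G Q → F ⊆ G → IsVerticalFacet G Q) :=
  projection_lemma_general d Q hQ hdQ F hF hFne

end
end

section
/- For every polytope P ⊂ ℝ^d and every point v ∈ ℝ^d, the extension complexity of conv(P ∪ {v}) is at most xc(P) + 1. -/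
open Set

noncomputable section

namespace XcAux

open Set Module

variable {n : ℕ}

/-- The linear functional `x ↦ ∑ i, c i * x i`. -/
def dotL (c : Fin n → ℝ) : (Fin n → ℝ) →ₗ[ℝ] ℝ where
  toFun x := ∑ i, c i * x i
  map_add' x y := by simp [mul_add, Finset.sum_add_distrib]
  map_smul' r x := by simp [Finset.mul_sum, mul_left_comm]

lemma dotL_apply (c x : Fin n → ℝ) : dotL c x = ∑ i, c i * x i := rfl

lemma pdim_of_nonempty {P : Set (Fin n → ℝ)} (h : P.Nonempty) :
    pdim P = (finrank ℝ (affineSpan ℝ P).direction : ℤ) := by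
  unfold pdim; exact if_pos h

lemma pdim_of_empty {P : Set (Fin n → ℝ)} (h : ¬ P.Nonempty) : pdim P = -1 := by
  unfold pdim; exact if_neg h

lemma pdim_empty : pdim (∅ : Set (Fin n → ℝ)) = -1 :=
  pdim_of_empty (by simp)

lemma pdim_nonneg {P : Set (Fin n → ℝ)} (h : P.Nonempty) : 0 ≤ pdim P := by
  rw [pdim_of_nonempty h]; positivity

lemma nonempty_of_pdim_nonneg {P : Set (Fin n → ℝ)} (h : 0 ≤ pdim P) : P.Nonempty := by
  by_contra hne
  rw [pdim_of_empty hne] at h; omega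

lemma pdim_convexHull (X : Set (Fin n → ℝ)) : pdim (convexHull ℝ X) = pdim X := by
  rcases X.eq_empty_or_nonempty with rfl | hX
  · simp
  · rw [pdim_of_nonempty (by rwa [convexHull_nonempty_iff]), pdim_of_nonempty hX,
      affineSpan_convexHull]

lemma pdim_insert {X : Set (Fin n → ℝ)} (hX : X.Nonempty) {a : Fin n → ℝ}
    (ha : a ∉ affineSpan ℝ X) : pdim (insert a X) = pdim X + 1 := by
  obtain ⟨p₀, hp₀⟩ := hX
  have hp₀' : p₀ ∈ affineSpan ℝ X := subset_affineSpan ℝ X hp₀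
  rw [pdim_of_nonempty ⟨p₀, Set.mem_insert_of_mem _ hp₀⟩, pdim_of_nonempty ⟨p₀, hp₀⟩]
  rw [← affineSpan_insert_affineSpan, AffineSubspace.direction_affineSpan_insert hp₀']
  have hv : a -ᵥ p₀ ∉ (affineSpan ℝ X).direction := by
    intro h
    exact ha (by simpa using AffineSubspace.vadd_mem_of_mem_direction h hp₀')
  have hv0 : a -ᵥ p₀ ≠ 0 := fun h => hv (h ▸ Submodule.zero_mem _)
  have hinf : Submodule.span ℝ {a -ᵥ p₀} ⊓ (affineSpan ℝ X).direction = ⊥ := by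
    rw [Submodule.eq_bot_iff]
    rintro x ⟨hx1, hx2⟩
    obtain ⟨r, rfl⟩ := Submodule.mem_span_singleton.1 hx1
    rcases eq_or_ne r 0 with rfl | hr
    · simp
    · exact absurd (by simpa [hr] using Submodule.smul_mem _ r⁻¹ hx2) hv
  have := Submodule.finrank_sup_add_finrank_inf_eq
    (Submodule.span ℝ {a -ᵥ p₀}) ((affineSpan ℝ X).direction)
  rw [hinf, finrank_bot, finrank_span_singleton hv0] at this
  omega

end XcAux
namespace XcAux

open Set Module

variable {n : ℕ}

lemma isFaceOf_subset {F P : Set (Fin n → ℝ)} (h : IsFaceOf F P) : F ⊆ P := by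
  obtain ⟨c, b, _, rfl⟩ := h
  exact fun x hx => hx.1

lemma IsFaceOf.convex {F P : Set (Fin n → ℝ)} (h : IsFaceOf F P) (hP : Convex ℝ P) :
    Convex ℝ F := by
  obtain ⟨c, b, _, rfl⟩ := h
  have : {x ∈ P | ∑ i, c i * x i = b} = P ∩ {x | dotL c x = b} := rfl
  rw [this]
  exact hP.inter (convex_hyperplane (dotL c).isLinear b)

open scoped Classical in
/-- A face of the convex hull of a finite set is the hull of a subset. -/
lemma face_eq_hull_filter (T : Finset (Fin n → ℝ)) (c : Fin n → ℝ) (b : ℝ)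
    (hb : ∀ x ∈ convexHull ℝ (T : Set (Fin n → ℝ)), ∑ i, c i * x i ≤ b) :
    {x ∈ convexHull ℝ (T : Set (Fin n → ℝ)) | ∑ i, c i * x i = b}
      = convexHull ℝ ((T.filter fun s => ∑ i, c i * s i = b : Finset _) : Set (Fin n → ℝ)) := by
  set T' := T.filter (fun s => ∑ i, c i * s i = b) with hT'
  apply Set.Subset.antisymm
  · rintro x ⟨hx, hxb⟩
    rw [Finset.convexHull_eq] at hx ⊢
    obtain ⟨w, hw0, hw1, hwx⟩ := hx
    rw [Finset.centerMass_eq_of_sum_1 _ _ hw1] at hwx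
    have hdx : dotL c x = ∑ y ∈ T, w y * dotL c y := by
      rw [← hwx, map_sum]
      simp [smul_eq_mul]
    have hkey : ∀ y ∈ T, w y ≠ 0 → dotL c y = b := by
      intro y hy hwy
      by_contra hyb
      have hyb' : dotL c y < b := lt_of_le_of_ne (hb y (subset_convexHull ℝ _ hy)) hyb
      have hlt : ∑ y ∈ T, w y * dotL c y < ∑ y ∈ T, w y * b := by
        refine Finset.sum_lt_sum (fun i hi =>
          mul_le_mul_of_nonneg_left (hb i (subset_convexHull ℝ _ hi)) (hw0 i hi))
          ⟨y, hy, mul_lt_mul_of_pos_left hyb' ((hw0 y hy).lt_of_ne (Ne.symm hwy))⟩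
      rw [← Finset.sum_mul, hw1, one_mul] at hlt
      have hbx : dotL c x = b := hxb
      linarith [hdx ▸ hbx]
    have hsub : T' ⊆ T := Finset.filter_subset _ _
    have hzero : ∀ y ∈ T, y ∉ T' → w y = 0 := by
      intro y hy hyn
      by_contra hwy
      exact hyn (Finset.mem_filter.2 ⟨hy, hkey y hy hwy⟩)
    have hw1' : ∑ y ∈ T', w y = 1 := by
      rw [← hw1]
      exact Finset.sum_subset hsub (fun y hy hyn => hzero y hy hyn)
    refine ⟨w, fun y hy => hw0 y (hsub hy), hw1', ?_⟩
    rw [Finset.centerMass_eq_of_sum_1 _ _ hw1', ← hwx]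
    exact Finset.sum_subset hsub (fun y hy hyn => by rw [hzero y hy hyn, zero_smul])
  · intro x hx
    have h1 : x ∈ convexHull ℝ (T : Set (Fin n → ℝ)) :=
      convexHull_mono (by exact_mod_cast Finset.coe_subset.2 (Finset.filter_subset _ _)) hx
    refine ⟨h1, ?_⟩
    have h2 : convexHull ℝ (T' : Set (Fin n → ℝ)) ⊆ {y | dotL c y = b} :=
      convexHull_min (fun y hy => (Finset.mem_filter.1 (by exact_mod_cast hy)).2)
        (convex_hyperplane (dotL c).isLinear b)
    exact h2 hx

open scoped Classical in
lemma faces_finite (T : Finset (Fin n → ℝ)) :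
    {F | IsFaceOf F (convexHull ℝ (T : Set (Fin n → ℝ)))}.Finite := by
  apply Set.Finite.subset
    (Set.Finite.image (fun T' : Finset (Fin n → ℝ) => convexHull ℝ (T' : Set (Fin n → ℝ)))
      (T.powerset : Finset (Finset (Fin n → ℝ))).finite_toSet)
  rintro F ⟨c, b, hb, rfl⟩
  exact ⟨T.filter fun s => ∑ i, c i * s i = b,
    Finset.mem_coe.2 (Finset.mem_powerset.2 (Finset.filter_subset _ _)),
    (face_eq_hull_filter T c b hb).symm⟩

lemma facets_finite (T : Finset (Fin n → ℝ)) :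
    {F | IsFacetOf F (convexHull ℝ (T : Set (Fin n → ℝ)))}.Finite :=
  (faces_finite T).subset (fun _ h => h.1)

/-- A nonempty face of full dimension is the whole set. -/
lemma face_eq_of_pdim_eq {F P : Set (Fin n → ℝ)} (hF : IsFaceOf F P) (hne : F.Nonempty)
    (hd : pdim F = pdim P) : F = P := by
  obtain ⟨c, b, hb, rfl⟩ := hF
  set F := {x ∈ P | ∑ i, c i * x i = b} with hFdef
  have hFP : F ⊆ P := fun x hx => hx.1
  have hPne : P.Nonempty := hne.mono hFP
  have hle : (affineSpan ℝ F).direction ≤ (affineSpan ℝ P).direction :=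
    AffineSubspace.direction_le (affineSpan_mono ℝ hFP)
  have hfr : finrank ℝ (affineSpan ℝ F).direction = finrank ℝ (affineSpan ℝ P).direction := by
    have := hd
    rw [pdim_of_nonempty hne, pdim_of_nonempty hPne] at this
    exact_mod_cast this
  have hdir : (affineSpan ℝ F).direction = (affineSpan ℝ P).direction :=
    Submodule.eq_of_le_of_finrank_eq hle hfr
  obtain ⟨p₀, hp₀⟩ := hne
  have hspan : affineSpan ℝ F = affineSpan ℝ P :=
    AffineSubspace.ext_of_direction_eq hdir
      ⟨p₀, subset_affineSpan ℝ F hp₀, subset_affineSpan ℝ P (hFP hp₀)⟩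
  -- the affine span of F is contained in the hyperplane
  have hHP : affineSpan ℝ F ≤ AffineSubspace.comap (dotL c).toAffineMap (affineSpan ℝ {b}) := by
    apply affineSpan_le.2
    intro x hx
    show dotL c x ∈ affineSpan ℝ ({b} : Set ℝ)
    rw [AffineSubspace.mem_affineSpan_singleton]
    exact hx.2
  apply Set.Subset.antisymm hFP
  intro x hx
  have hx' : x ∈ affineSpan ℝ F := hspan ▸ subset_affineSpan ℝ P hx
  have hxb : dotL c x = b := by
    have h2 : dotL c x ∈ affineSpan ℝ ({b} : Set ℝ) := hHP hx'
    rwa [AffineSubspace.mem_affineSpan_singleton] at h2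
  exact ⟨hx, hxb⟩

/-- `pdim` is preserved by injective linear maps. -/
lemma pdim_image {m : ℕ} (f : (Fin n → ℝ) →ₗ[ℝ] (Fin m → ℝ)) (hf : Function.Injective f)
    (X : Set (Fin n → ℝ)) : pdim (f '' X) = pdim X := by
  rcases X.eq_empty_or_nonempty with rfl | hX
  · rw [Set.image_empty, pdim_empty, pdim_empty]
  · rw [pdim_of_nonempty (hX.image f), pdim_of_nonempty hX]
    have hsp : affineSpan ℝ (⇑f '' X) = (affineSpan ℝ X).map f.toAffineMap := by
      rw [AffineSubspace.map_span]
      rfl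
    rw [hsp, AffineSubspace.map_direction]
    have : (affineSpan ℝ X).direction.map (f.toAffineMap.linear)
        = (affineSpan ℝ X).direction.map f := rfl
    rw [this]
    congr 1
    exact (LinearEquiv.finrank_eq (Submodule.equivMapOfInjective f hf _)).symm

end XcAux
namespace XcAux

open Set Module

variable {e : ℕ}

/-- Inclusion `ℝ^e → ℝ^{e+1}` by appending a zero coordinate. -/
def ince (e : ℕ) : (Fin e → ℝ) →ₗ[ℝ] (Fin (e + 1) → ℝ) where
  toFun x i := if h : (i : ℕ) < e then x ⟨i, h⟩ else 0
  map_add' x y := by funext i; by_cases h : (i : ℕ) < e <;> simp [h]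
  map_smul' r x := by funext i; by_cases h : (i : ℕ) < e <;> simp [h]

lemma ince_castSucc (x : Fin e → ℝ) (i : Fin e) : ince e x i.castSucc = x i := by
  have h : ((i.castSucc : Fin (e + 1)) : ℕ) < e := by simp
  simp only [ince, LinearMap.coe_mk, AddHom.coe_mk, dif_pos h]
  congr 1

lemma ince_last (x : Fin e → ℝ) : ince e x (Fin.last e) = 0 := by
  simp [ince]

lemma ince_inj : Function.Injective (ince e) := by
  intro x y h
  funext i
  have := congrFun h i.castSucc
  rwa [ince_castSucc, ince_castSucc] at this

/-- The apex of the pyramid. -/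
def ap (e : ℕ) : Fin (e + 1) → ℝ := Pi.single (Fin.last e) 1

lemma ap_last : ap e (Fin.last e) = 1 := Pi.single_eq_same _ _

lemma ap_castSucc (i : Fin e) : ap e i.castSucc = 0 :=
  Pi.single_eq_of_ne (Fin.castSucc_lt_last i).ne 1

lemma dot_ince (c : Fin (e + 1) → ℝ) (x : Fin e → ℝ) :
    ∑ i, c i * ince e x i = ∑ i : Fin e, c i.castSucc * x i := by
  rw [Fin.sum_univ_castSucc]
  simp [ince_castSucc, ince_last]

lemma ap_not_mem_span {X : Set (Fin (e + 1) → ℝ)} (hX : ∀ z ∈ X, z (Fin.last e) = 0) :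
    ap e ∉ affineSpan ℝ X := by
  intro h
  have hle : affineSpan ℝ X ≤
      (LinearMap.ker (LinearMap.proj (R := ℝ) (φ := fun _ : Fin (e + 1) => ℝ)
        (Fin.last e))).toAffineSubspace := by
    apply affineSpan_le.2
    intro z hz
    show z ∈ LinearMap.ker _
    rw [LinearMap.mem_ker]
    exact hX z hz
  have h2 := hle h
  have h3 : ap e (Fin.last e) = 0 := h2
  rw [ap_last] at h3
  norm_num at h3

/-- The pyramid over the polytope spanned by `T`. -/
def pyr (T : Finset (Fin e → ℝ)) : Set (Fin (e + 1) → ℝ) :=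
  convexHull ℝ (insert (ap e) (ince e '' convexHull ℝ (T : Set (Fin e → ℝ))))

open scoped Classical in
lemma pyr_eq_hull_finset (T : Finset (Fin e → ℝ)) :
    pyr T = convexHull ℝ ((insert (ap e) (T.image (ince e)) : Finset _) :
      Set (Fin (e + 1) → ℝ)) := by
  rw [pyr, LinearMap.image_convexHull, Set.insert_eq, convexHull_convexHull_union_right]
  congr 1
  simp

lemma mem_pyr_iff {T : Finset (Fin e → ℝ)} (hT : (T : Set (Fin e → ℝ)).Nonempty)
    {z : Fin (e + 1) → ℝ} : z ∈ pyr T ↔ ∃ q ∈ convexHull ℝ (T : Set (Fin e → ℝ)),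
      ∃ t : ℝ, 0 ≤ t ∧ t ≤ 1 ∧ z = t • ap e + (1 - t) • ince e q := by
  have hQne : (convexHull ℝ (T : Set (Fin e → ℝ))).Nonempty := by rwa [convexHull_nonempty_iff]
  have hBc : Convex ℝ (ince e '' convexHull ℝ (T : Set (Fin e → ℝ))) :=
    (convex_convexHull ℝ _).linear_image (ince e)
  rw [pyr, convexHull_insert (hQne.image _), mem_convexJoin]
  constructor
  · rintro ⟨u, hu, y, hy, hz⟩
    rw [Set.mem_singleton_iff] at hu
    subst hu
    rw [hBc.convexHull_eq] at hy
    obtain ⟨q, hq, rfl⟩ := hy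
    rw [segment_eq_image] at hz
    obtain ⟨θ, hθ, hz⟩ := hz
    exact ⟨q, hq, 1 - θ, by linarith [hθ.2], by linarith [hθ.1], by rw [← hz]; ring_nf⟩
  · rintro ⟨q, hq, t, ht0, ht1, rfl⟩
    exact ⟨ap e, Set.mem_singleton _, ince e q, by rw [hBc.convexHull_eq]; exact ⟨q, hq, rfl⟩,
      t, 1 - t, ht0, by linarith, by ring, rfl⟩

end XcAux
namespace XcAux

open Set Module

variable {e : ℕ}

lemma pdim_singleton {n : ℕ} (a : Fin n → ℝ) : pdim ({a} : Set (Fin n → ℝ)) = 0 := by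
  rw [pdim_of_nonempty (Set.singleton_nonempty a), direction_affineSpan, vectorSpan_singleton]
  simp

open scoped Classical in
lemma facetCount_pyr_le (T : Finset (Fin e → ℝ)) (hT : (T : Set (Fin e → ℝ)).Nonempty) :
    facetCount (pyr T) ≤ facetCount (convexHull ℝ (T : Set (Fin e → ℝ))) + 1 := by
  set Q : Set (Fin e → ℝ) := convexHull ℝ (T : Set (Fin e → ℝ)) with hQdef
  have hQne : Q.Nonempty := by rwa [hQdef, convexHull_nonempty_iff]
  set a : Fin (e + 1) → ℝ := ap e with hadef
  set B : Set (Fin (e + 1) → ℝ) := ince e '' Q with hBdef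
  have haB : a ∉ affineSpan ℝ B := ap_not_mem_span (by rintro z ⟨q, _, rfl⟩; exact ince_last q)
  have hBQ' : B ⊆ pyr T := fun z hz => subset_convexHull ℝ _ (Set.mem_insert_of_mem _ hz)
  have haQ' : a ∈ pyr T := subset_convexHull ℝ _ (Set.mem_insert _ _)
  have hd : pdim (pyr T) = pdim Q + 1 := by
    rw [pyr, pdim_convexHull, pdim_insert (hQne.image _) haB, pdim_image _ ince_inj]
  set Φ : Set (Fin (e + 1) → ℝ) → Set (Fin e → ℝ) := fun F' => {q ∈ Q | ince e q ∈ F'}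
    with hΦdef
  have key : ∀ F' : Set (Fin (e + 1) → ℝ), IsFacetOf F' (pyr T) →
      (a ∈ F' → IsFacetOf (Φ F') Q ∧ F' = convexHull ℝ (insert a (ince e '' Φ F'))) ∧
      (a ∉ F' → Φ F' = Q ∧ F' = B) := by
    rintro F' ⟨⟨c, b, hb, hF'eq⟩, hdim⟩
    have hmemF' : ∀ z, z ∈ F' ↔ z ∈ pyr T ∧ ∑ i, c i * z i = b := by
      intro z; rw [hF'eq]; exact Iff.rfl
    have hGface : IsFaceOf (Φ F') Q := by
      refine ⟨fun i => c i.castSucc, b, ?_, ?_⟩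
      · intro q hq
        rw [← dot_ince]
        exact hb _ (hBQ' ⟨q, hq, rfl⟩)
      · ext q
        simp only [hΦdef, Set.mem_setOf_eq, hmemF']
        constructor
        · rintro ⟨hq, _, hd2⟩
          refine ⟨hq, ?_⟩
          rw [← dot_ince]
          exact hd2
        · rintro ⟨hq, hd2⟩
          exact ⟨hq, hBQ' ⟨q, hq, rfl⟩, by rw [dot_ince]; exact hd2⟩
    have hexp : ∀ (t : ℝ) (q : Fin e → ℝ),
        ∑ i, c i * (t • a + (1 - t) • ince e q) i
          = t * (∑ i, c i * a i) + (1 - t) * (∑ i, c i * ince e q i) := by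
      intro t q
      rw [← dotL_apply, ← dotL_apply, ← dotL_apply, map_add, map_smul, map_smul]
      simp [smul_eq_mul]
    constructor
    · intro ha
      have hba : ∑ i, c i * a i = b := ((hmemF' a).1 ha).2
      have hF'conv : Convex ℝ F' :=
        IsFaceOf.convex ⟨c, b, hb, hF'eq⟩ (convex_convexHull ℝ _)
      have hFc : F' = convexHull ℝ (insert a (ince e '' Φ F')) := by
        apply Set.Subset.antisymm
        · intro z hz
          have hzP := ((hmemF' z).1 hz).1
          have hzb := ((hmemF' z).1 hz).2
          obtain ⟨q, hq, t, ht0, ht1, rfl⟩ := (mem_pyr_iff hT).1 hzP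
          have hdz := hexp t q
          rcases eq_or_lt_of_le ht1 with heq | htlt
          · subst heq
            have : (1 : ℝ) • a + (1 - 1 : ℝ) • ince e q = a := by simp
            rw [this]
            exact subset_convexHull ℝ _ (Set.mem_insert _ _)
          · have hq' : ∑ i, c i * ince e q i = b := by
              have h2 : (1 - t) * (∑ i, c i * ince e q i) = (1 - t) * b := by
                rw [hdz, hba] at hzb; linarith
              exact mul_left_cancel₀ (by linarith) h2
            have hqΦ : q ∈ Φ F' := by
              simp only [hΦdef, Set.mem_setOf_eq]
              exact ⟨hq, (hmemF' _).2 ⟨hBQ' ⟨q, hq, rfl⟩, hq'⟩⟩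
            exact (convex_convexHull ℝ _)
              (subset_convexHull ℝ _ (Set.mem_insert _ _))
              (subset_convexHull ℝ _ (Set.mem_insert_of_mem a (Set.mem_image_of_mem _ hqΦ)))
              ht0 (by linarith) (by ring)
        · apply convexHull_min _ hF'conv
          intro z hz
          rcases Set.mem_insert_iff.1 hz with rfl | ⟨q, hqΦ, rfl⟩
          · exact ha
          · exact hqΦ.2
      have hdim' : pdim F' = pdim Q := by linarith [hdim, hd]
      rcases (Φ F').eq_empty_or_nonempty with hGe | hGne
      · have hFa : F' = {a} := by rw [hFc, hGe]; simp
        have h0 : pdim F' = 0 := by rw [hFa]; exact pdim_singleton a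
        refine ⟨⟨hGface, ?_⟩, hFc⟩
        rw [hGe, pdim_empty]
        linarith
      · have hdF : pdim F' = pdim (Φ F') + 1 := by
          conv_lhs => rw [hFc]
          rw [pdim_convexHull,
            pdim_insert (hGne.image _)
              (ap_not_mem_span (by rintro z ⟨q, _, rfl⟩; exact ince_last q)),
            pdim_image _ ince_inj]
        exact ⟨⟨hGface, by linarith⟩, hFc⟩
    · intro ha
      have hba : ∑ i, c i * a i < b :=
        lt_of_le_of_ne (hb a haQ') (fun h => ha ((hmemF' a).2 ⟨haQ', h⟩))
      have hF'B : F' ⊆ B := by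
        intro z hz
        have hzP := ((hmemF' z).1 hz).1
        have hzb := ((hmemF' z).1 hz).2
        obtain ⟨q, hq, t, ht0, ht1, rfl⟩ := (mem_pyr_iff hT).1 hzP
        have hdz := hexp t q
        have hqb : ∑ i, c i * ince e q i ≤ b := hb _ (hBQ' ⟨q, hq, rfl⟩)
        have ht : t = 0 := by nlinarith
        rw [ht]
        have : (0 : ℝ) • a + (1 - 0 : ℝ) • ince e q = ince e q := by simp
        rw [this]
        exact ⟨q, hq, rfl⟩
      have hF'G : F' = ince e '' Φ F' := by
        apply Set.Subset.antisymm
        · intro z hz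
          obtain ⟨q, hq, rfl⟩ := hF'B hz
          exact ⟨q, ⟨hq, hz⟩, rfl⟩
        · rintro z ⟨q, hqΦ, rfl⟩
          exact hqΦ.2
      have hdim' : pdim F' = pdim Q := by linarith [hdim, hd]
      have hF'ne : F'.Nonempty :=
        nonempty_of_pdim_nonneg (by rw [hdim']; exact pdim_nonneg hQne)
      have hGQ : Φ F' = Q := by
        apply face_eq_of_pdim_eq hGface
        · obtain ⟨z, hz⟩ := hF'ne
          obtain ⟨q, hq, rfl⟩ := hF'B hz
          exact ⟨q, hq, hz⟩
        · rw [← pdim_image (ince e) ince_inj (Φ F'), ← hF'G, hdim']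
      exact ⟨hGQ, by rw [hF'G, hGQ]⟩
  have hmaps : ∀ F' ∈ {F | IsFacetOf F (pyr T)}, Φ F' ∈ insert Q {F | IsFacetOf F Q} := by
    intro F' hF'
    by_cases ha : a ∈ F'
    · exact Set.mem_insert_of_mem _ ((key F' hF').1 ha).1
    · rw [((key F' hF').2 ha).1]
      exact Set.mem_insert _ _
  have hinj : Set.InjOn Φ {F | IsFacetOf F (pyr T)} := by
    intro F₁ h₁ F₂ h₂ hΦeq
    by_cases ha1 : a ∈ F₁ <;> by_cases ha2 : a ∈ F₂
    · rw [((key F₁ h₁).1 ha1).2, ((key F₂ h₂).1 ha2).2, hΦeq]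
    · exfalso
      have e1 := ((key F₁ h₁).1 ha1).1.2
      have e2 := ((key F₂ h₂).2 ha2).1
      rw [hΦeq, e2] at e1
      linarith
    · exfalso
      have e1 := ((key F₂ h₂).1 ha2).1.2
      have e2 := ((key F₁ h₁).2 ha1).1
      rw [← hΦeq, e2] at e1
      linarith
    · rw [((key F₁ h₁).2 ha1).2, ((key F₂ h₂).2 ha2).2]
  have hfin : (insert Q {F | IsFacetOf F Q}).Finite := (facets_finite T).insert Q
  calc facetCount (pyr T) = {F | IsFacetOf F (pyr T)}.ncard := rfl
    _ ≤ (insert Q {F | IsFacetOf F Q}).ncard :=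
        Set.ncard_le_ncard_of_injOn Φ hmaps hinj hfin
    _ ≤ {F | IsFacetOf F Q}.ncard + 1 := Set.ncard_insert_le _ _
    _ = facetCount Q + 1 := rfl

end XcAux
namespace XcAux

open Set Module

/-- The facets of a point in `ℝ^0`. -/
lemma facets_point0 : {F | IsFacetOf F ({0} : Set (Fin 0 → ℝ))} = {∅} := by
  ext F
  simp only [Set.mem_setOf_eq, Set.mem_singleton_iff]
  constructor
  · rintro ⟨hface, hdim⟩
    rw [pdim_singleton] at hdim
    by_contra hne
    rw [← Ne, ← Set.nonempty_iff_ne_empty] at hne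
    have := pdim_nonneg hne
    omega
  · rintro rfl
    refine ⟨⟨0, 1, ?_, ?_⟩, ?_⟩
    · intro x _
      simp
    · ext x
      simp
    · rw [pdim_empty, pdim_singleton]
      norm_num

lemma facetCount_point0 : facetCount ({0} : Set (Fin 0 → ℝ)) = 1 := by
  rw [facetCount, facets_point0, Set.ncard_singleton]

/-- The linear part of the pyramid projection. -/
def pyrL {e N : ℕ} (π : (Fin e → ℝ) →ᵃ[ℝ] (Fin N → ℝ)) (v : Fin N → ℝ) :
    (Fin (e + 1) → ℝ) →ₗ[ℝ] (Fin N → ℝ) :=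
  π.linear.comp (LinearMap.funLeft ℝ ℝ Fin.castSucc)
    + LinearMap.smulRight
        (LinearMap.proj (R := ℝ) (φ := fun _ : Fin (e + 1) => ℝ) (Fin.last e)) (v - π 0)

lemma pyrL_apply {e N : ℕ} (π : (Fin e → ℝ) →ᵃ[ℝ] (Fin N → ℝ)) (v : Fin N → ℝ)
    (y : Fin (e + 1) → ℝ) :
    pyrL π v y = π.linear (y ∘ Fin.castSucc) + y (Fin.last e) • (v - π 0) := rfl

/-- The affine projection from the pyramid. -/
def pyrProj {e N : ℕ} (π : (Fin e → ℝ) →ᵃ[ℝ] (Fin N → ℝ)) (v : Fin N → ℝ) :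
    (Fin (e + 1) → ℝ) →ᵃ[ℝ] (Fin N → ℝ) where
  toFun y := pyrL π v y + π 0
  linear := pyrL π v
  map_vadd' p w := by
    simp only [vadd_eq_add, map_add]
    abel

lemma pyrProj_ince {e N : ℕ} (π : (Fin e → ℝ) →ᵃ[ℝ] (Fin N → ℝ)) (v : Fin N → ℝ)
    (q : Fin e → ℝ) : pyrProj π v (ince e q) = π q := by
  have h1 : LinearMap.funLeft ℝ ℝ Fin.castSucc (ince e q) = q := by
    funext i
    exact ince_castSucc q i
  have h2 : π (q +ᵥ (0 : Fin e → ℝ)) = π.linear q +ᵥ π 0 := π.map_vadd 0 q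
  simp only [vadd_eq_add, add_zero] at h2
  show pyrL π v (ince e q) + π 0 = π q
  rw [pyrL_apply]
  have h1' : (ince e q) ∘ Fin.castSucc = q := by funext i; exact ince_castSucc q i
  rw [h1', ince_last, zero_smul, add_zero, h2]

lemma pyrProj_ap {e N : ℕ} (π : (Fin e → ℝ) →ᵃ[ℝ] (Fin N → ℝ)) (v : Fin N → ℝ) :
    pyrProj π v (ap e) = v := by
  have h1 : LinearMap.funLeft ℝ ℝ Fin.castSucc (ap e) = 0 := by
    funext i
    exact ap_castSucc i
  show pyrL π v (ap e) + π 0 = v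
  rw [pyrL_apply]
  have h1' : (ap e) ∘ Fin.castSucc = 0 := by funext i; exact ap_castSucc i
  rw [h1', ap_last, one_smul, map_zero]
  abel

lemma pyrProj_image {e N : ℕ} (π : (Fin e → ℝ) →ᵃ[ℝ] (Fin N → ℝ)) (v : Fin N → ℝ)
    (T : Finset (Fin e → ℝ)) :
    pyrProj π v '' pyr T = convexHull ℝ ((π '' convexHull ℝ (T : Set (Fin e → ℝ))) ∪ {v}) := by
  rw [pyr, AffineMap.image_convexHull, Set.image_insert_eq, pyrProj_ap,
    Set.image_image, Set.union_singleton]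
  rw [Set.image_congr (fun x _ => pyrProj_ince π v x)]

end XcAux

theorem xc_add_vertex (N : ℕ) (P : Set (Fin N → ℝ)) (v : Fin N → ℝ)
    (hP : IsPolytope P) :
    xc (convexHull ℝ (P ∪ {v})) ≤ xc P + 1 := by
  classical
  rcases P.eq_empty_or_nonempty with rfl | hPne
  · have h1 : 1 ∈ {n | ∃ (e : ℕ) (Q : Set (Fin e → ℝ)) (π : (Fin e → ℝ) →ᵃ[ℝ] (Fin N → ℝ)),
        IsPolytope Q ∧ π '' Q = convexHull ℝ ((∅ : Set (Fin N → ℝ)) ∪ {v})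
          ∧ facetCount Q = n} := by
      refine ⟨0, {0}, AffineMap.const ℝ (Fin 0 → ℝ) v, ⟨{0}, by simp⟩, ?_,
        XcAux.facetCount_point0⟩
      rw [Set.empty_union, convexHull_singleton, Set.image_singleton]
      simp
    exact le_trans (Nat.sInf_le h1) (Nat.succ_le_succ (Nat.zero_le _))
  · have hSne : {n | ∃ (e : ℕ) (Q : Set (Fin e → ℝ)) (π : (Fin e → ℝ) →ᵃ[ℝ] (Fin N → ℝ)),
        IsPolytope Q ∧ π '' Q = P ∧ facetCount Q = n}.Nonempty :=
      ⟨facetCount P, N, P, AffineMap.id ℝ (Fin N → ℝ), hP, by simp, rfl⟩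
    obtain ⟨e, Q, π, hQpoly, hπ, hfc⟩ := Nat.sInf_mem hSne
    obtain ⟨T, rfl⟩ := hQpoly
    have hTne : (T : Set (Fin e → ℝ)).Nonempty := by
      rcases T.eq_empty_or_nonempty with rfl | h
      · exfalso
        rw [Finset.coe_empty, convexHull_empty, Set.image_empty] at hπ
        exact hPne.ne_empty hπ.symm
      · exact_mod_cast h
    have hmem2 : facetCount (XcAux.pyr T) ∈ {n | ∃ (e' : ℕ) (Q' : Set (Fin e' → ℝ))
        (π' : (Fin e' → ℝ) →ᵃ[ℝ] (Fin N → ℝ)), IsPolytope Q'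
          ∧ π' '' Q' = convexHull ℝ (P ∪ {v}) ∧ facetCount Q' = n} :=
      ⟨e + 1, XcAux.pyr T, XcAux.pyrProj π v,
        ⟨insert (XcAux.ap e) (T.image (XcAux.ince e)), XcAux.pyr_eq_hull_finset T⟩,
        by rw [XcAux.pyrProj_image, hπ], rfl⟩
    calc xc (convexHull ℝ (P ∪ {v})) ≤ facetCount (XcAux.pyr T) := Nat.sInf_le hmem2
      _ ≤ facetCount (convexHull ℝ (T : Set (Fin e → ℝ))) + 1 := XcAux.facetCount_pyr_le T hTne
      _ = xc P + 1 := by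
          rw [show xc P = facetCount (convexHull ℝ (T : Set (Fin e → ℝ))) from hfc.symm]

end
end
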